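/- Let K_v/F_{v_F} be an unramified quadratic extension of p-adic fields with residue degree f = f(K_v/ℚ_p), and suppose the sequence (a_0, a_1, …, a_{f-1}) of integers satisfies a_{i+1} - a_i ∈ {-1, 0, 1} (indices mod f), with exactly one index i where the increment is +1 and exactly one index i where the increment is -1, these two indices differing by j = f/2. Then a_i + a_{i+j} is constant equal to a_0 + a_j for all i, and the sequence takes exactly two values differing by 1. -/
import Mathlib


/-!
STATEMENT 4: the combinatorial core of Proposition 3.2 in the unramified case.  The
integers `a i = ord_{ψ^i}(s)`, indexed by `ZMod f` with `f = f(K_v/ℚ_p)` even, have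
increments `a (i+1) - a i ∈ {-1,0,1}`, with exactly one increment `+1` (at `ip`) and
exactly one increment `-1` (at `im`), and `im = ip + f/2`.  Then `a i + a (i + f/2)` is
constant equal to `a 0 + a (f/2)`, and the sequence takes exactly two values differing
by `1` (the shape `(0,…,0,1,…,1,0,…,0)`).
-/
theorem valuation_sequence_shape
    (f : ℕ) (hf2 : 2 ≤ f) (hfe : Even f) [NeZero f]
    (a : ZMod f → ℤ)
    (ip im : ZMod f)
    (hp : a (ip + 1) - a ip = 1)
    (hm : a (im + 1) - a im = -1)
    (hinc : ∀ i : ZMod f, a (i + 1) - a i ∈ ({-1, 0, 1} : Set ℤ))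
    (huniqp : ∀ i : ZMod f, a (i + 1) - a i = 1 → i = ip)
    (huniqm : ∀ i : ZMod f, a (i + 1) - a i = -1 → i = im)
    (hdiff : im = ip + ((f / 2 : ℕ) : ZMod f)) :
    (∀ i : ZMod f, a i + a (i + ((f / 2 : ℕ) : ZMod f)) =
        a 0 + a ((f / 2 : ℕ) : ZMod f)) ∧
      ∃ m : ℤ, (∀ i, a i = m ∨ a i = m + 1) ∧ (∃ i, a i = m) ∧ (∃ i, a i = m + 1) := by
  obtain ⟨t, ht⟩ := hfe
  set j : ZMod f := ((f / 2 : ℕ) : ZMod f) with hjdef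
  have hval : ∀ k : ℕ, k < f → ((k : ZMod f)).val = k := fun k hk => ZMod.val_cast_of_lt hk
  have h2j : j + j = 0 := by
    rw [hjdef, ← Nat.cast_add]
    have : f / 2 + f / 2 = f := by omega
    rw [this, ZMod.natCast_self]
  have hjlt : f / 2 < f := by omega
  have hjne : j ≠ 0 := by
    intro h
    have := hval (f / 2) hjlt
    rw [← hjdef, h, ZMod.val_zero] at this
    omega
  -- increments are 0 away from ip and im
  have hzero : ∀ i : ZMod f, i ≠ ip → i ≠ im → a (i + 1) - a i = 0 := by
    intro i h1 h2
    rcases hinc i with h | h | h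
    · exact absurd (huniqm i h) h2
    · exact h
    · exact absurd (huniqp i h) h1
  -- step for the sum
  have hstep : ∀ i : ZMod f, a (i + 1) + a (i + 1 + j) = a i + a (i + j) := by
    intro i
    by_cases h1 : i = ip
    · have h2 : i + j = im := by rw [h1, hdiff]
      have h3 : i + 1 + j = im + 1 := by rw [← h2]; ring
      have hp' := hp; rw [← h1] at hp'
      rw [h2, h3]; linarith [hp', hm]
    · by_cases h2 : i = im
      · have h3 : i + j = ip := by rw [h2, hdiff, add_assoc, h2j, add_zero]
        have h4 : i + 1 + j = ip + 1 := by rw [← h3]; ring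
        have hm' := hm; rw [← h2] at hm'
        rw [h3, h4]; linarith [hp, hm']
      · have h3 : i + j ≠ ip := by
          intro h
          apply h2
          rw [hdiff, ← h, add_assoc, h2j, add_zero]
        have h4 : i + j ≠ im := by
          intro h
          apply h1
          rw [hdiff] at h
          exact add_right_cancel h
        have e1 := hzero i h1 h2
        have e2 := hzero (i + j) h3 h4
        have h5 : i + j + 1 = i + 1 + j := by ring
        rw [h5] at e2
        linarith
  have hconstk : ∀ k : ℕ, a ((k : ZMod f)) + a ((k : ZMod f) + j) = a 0 + a j := by
    intro k
    induction k with
    | zero => simp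
    | succ n ih =>
      have : ((n + 1 : ℕ) : ZMod f) = (n : ZMod f) + 1 := by push_cast; ring
      rw [this, hstep]
      exact ih
  have hconst : ∀ i : ZMod f, a i + a (i + j) = a 0 + a j := by
    intro i
    have := hconstk i.val
    rwa [ZMod.natCast_val, ZMod.cast_id] at this
  refine ⟨hconst, a ip, ?_, ⟨ip, rfl⟩, ⟨ip + 1, by linarith⟩⟩
  -- the arc lemma
  have harc : ∀ k : ℕ, 1 ≤ k → k ≤ f →
      a (ip + (k : ZMod f)) = if k ≤ f / 2 then a ip + 1 else a ip := by
    intro k hk1 hkf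
    induction k with
    | zero => omega
    | succ n ih =>
      rcases Nat.eq_or_lt_of_le hk1 with h1 | h1
      · -- n + 1 = 1
        have hn : n = 0 := by omega
        subst hn
        rw [if_pos (by omega : (0:ℕ) + 1 ≤ f / 2)]
        have hc1 : ((0 + 1 : ℕ) : ZMod f) = 1 := by norm_num
        rw [hc1]
        linarith
      · -- 1 ≤ n
        have hn1 : 1 ≤ n := by omega
        have hnf : n ≤ f := by omega
        have hnltf : n < f := by omega
        have key := ih hn1 hnf
        have hcast : ((n + 1 : ℕ) : ZMod f) = (n : ZMod f) + 1 := by push_cast; ring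
        have hx : ip + ((n + 1 : ℕ) : ZMod f) = ip + (n : ZMod f) + 1 := by
          rw [hcast]; ring
        have hne_ip : ip + (n : ZMod f) ≠ ip := by
          intro h
          have h0 : (n : ZMod f) = 0 := by rwa [add_eq_left] at h
          have := hval n hnltf
          rw [h0, ZMod.val_zero] at this
          omega
        by_cases hmid : n = f / 2
        · -- drop at im
          have him : ip + (n : ZMod f) = im := by rw [hdiff, hmid]
          have := hm
          rw [← him] at this
          rw [hx]
          have hle : n ≤ f / 2 := le_of_eq hmid
          have hgt : ¬ (n + 1 ≤ f / 2) := by omega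
          rw [if_neg hgt]
          rw [if_pos hle] at key
          linarith
        · have hne_im : ip + (n : ZMod f) ≠ im := by
            rw [hdiff]
            intro h
            have h0 : (n : ZMod f) = j := add_left_cancel h
            have hv1 : j.val = n := by rw [← h0]; exact hval n hnltf
            have hv2 : j.val = f / 2 := by rw [hjdef]; exact hval _ hjlt
            omega
          have e := hzero _ hne_ip hne_im
          rw [hx]
          have : a (ip + (n : ZMod f) + 1) = a (ip + (n : ZMod f)) := by linarith
          rw [this, key]
          have : (n + 1 ≤ f / 2) ↔ (n ≤ f / 2) := by omega
          simp only [this]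
  intro i
  set k : ℕ := (i - ip).val with hkdef
  have hklt : k < f := ZMod.val_lt _
  have hik : i = ip + (k : ZMod f) := by
    rw [hkdef, ZMod.natCast_val, ZMod.cast_id]
    ring
  by_cases hk0 : k = 0
  · left
    rw [hik, hk0]
    simp
  · have := harc k (by omega) (by omega)
    rw [hik, this]
    split_ifs
    · right; ring
    · left; rfl
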